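/- If x ≺ y for nonnegative vectors with nonincreasing components, then x can be derived from y by applying at most n−1 B-transforms. -/

import Mathlib

open Finset Matrix

/-- Prefix sum of the first `k` components. -/
def psum {n : ℕ} (x : Fin n → ℝ) (k : ℕ) : ℝ :=
  ∑ i ∈ Finset.filter (fun i : Fin n => (i : ℕ) < k) Finset.univ, x i

/-- `x` is majorized by `y` (both assumed sorted nonincreasingly). -/
def Maj {n : ℕ} (x y : Fin n → ℝ) : Prop :=
  (∀ k, k < n → psum x k ≤ psum y k) ∧ (∑ i, x i) = ∑ i, y i

/-- An A-transform: for `i < j` and `λ ∈ [0,1]`, replace `x i` by `x i + λ * x j`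
and `x j` by `(1 - λ) * x j`. -/
def ATrans {n : ℕ} (x x' : Fin n → ℝ) : Prop :=
  ∃ (i j : Fin n) (lam : ℝ), i < j ∧ 0 ≤ lam ∧ lam ≤ 1 ∧
    x' = Function.update (Function.update x i (x i + lam * x j)) j ((1 - lam) * x j)

/-- A B-transform: for `i < j` and `λ ∈ [0,1]`, replace `y i` by `(1 - λ) * y i`
and `y j` by `y j + λ * y i`. -/
def BTrans {n : ℕ} (y y' : Fin n → ℝ) : Prop :=
  ∃ (i j : Fin n) (lam : ℝ), i < j ∧ 0 ≤ lam ∧ lam ≤ 1 ∧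
    y' = Function.update (Function.update y i ((1 - lam) * y i)) j (y j + lam * y i)

/-- Lower triangular row-stochastic matrix. -/
def LowerRS {n : ℕ} (L : Matrix (Fin n) (Fin n) ℝ) : Prop :=
  (∀ i j, 0 ≤ L i j) ∧ (∀ i j : Fin n, i < j → L i j = 0) ∧ (∀ i, ∑ j, L i j = 1)

/-- Upper triangular row-stochastic matrix. -/
def UpperRS {n : ℕ} (U : Matrix (Fin n) (Fin n) ℝ) : Prop :=
  (∀ i j, 0 ≤ U i j) ∧ (∀ i j : Fin n, j < i → U i j = 0) ∧ (∀ i, ∑ j, U i j = 1)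

/-
Let `i` be the first index where `x` and `y` differ. Equal prefix sums before `i` and
`psum x (i + 1) ≤ psum y (i + 1)` force `x i < y i`; equal totals then give a first `j > i`
with `y j < x j`. Moving `δ = min (y i - x i) (x j - y j)` from `y i` to `y j` is a B-transform
(as `δ ≤ y i` because `x i ≥ 0`), keeps `x ≺ y`, since every prefix sum of `y - x` ending
in `(i, j]` already contains the term `y i - x i ≥ δ`, and fixes a position where `x` and `y`
differ. As `x` and `y` have the same total, they cannot differ in exactly one position, so
starting from `d ≤ n` differences at most `d - 1` such steps reach `x`.
-/

section

variable {n : ℕ}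

lemma psum_add (g h : Fin n → ℝ) (k : ℕ) : psum (g + h) k = psum g k + psum h k :=
  Finset.sum_add_distrib

lemma psum_sub (g h : Fin n → ℝ) (k : ℕ) : psum (g - h) k = psum g k - psum h k :=
  Finset.sum_sub_distrib ..

lemma psum_single (i : Fin n) (c : ℝ) (k : ℕ) :
    psum (Pi.single i c) k = if (i : ℕ) < k then c else 0 := by
  simp [psum, Finset.sum_pi_single']

lemma psum_of_le (g : Fin n → ℝ) {k : ℕ} (hk : n ≤ k) : psum g k = ∑ i, g i := by
  unfold psum
  rw [Finset.filter_true_of_mem fun i _ => i.is_lt.trans_le hk]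

lemma psum_succ (g : Fin n → ℝ) (i : Fin n) : psum g (i + 1) = psum g i + g i := by
  unfold psum
  have : Finset.univ.filter (fun m : Fin n => (m : ℕ) < i + 1)
      = insert i (Finset.univ.filter fun m : Fin n => (m : ℕ) < i) := by
    ext m
    simp only [Finset.mem_filter, Finset.mem_univ, true_and, Finset.mem_insert, Fin.ext_iff]
    omega
  rw [this, Finset.sum_insert (by simp), add_comm]

lemma le_psum_of_nonneg {g : Fin n → ℝ} {k : ℕ} (hg : ∀ m : Fin n, (m : ℕ) < k → 0 ≤ g m)
    {i : Fin n} (hi : (i : ℕ) < k) : g i ≤ psum g k :=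
  Finset.single_le_sum (fun m hm => hg m (Finset.mem_filter.mp hm).2) (by simpa using hi)

lemma Maj.psum_le {x y : Fin n → ℝ} (h : Maj x y) (k : ℕ) : psum x k ≤ psum y k := by
  rcases lt_or_ge k n with hk | hk
  · exact h.1 k hk
  · rw [psum_of_le x hk, psum_of_le y hk, h.2]

def transfer (y : Fin n → ℝ) (i j : Fin n) (δ : ℝ) : Fin n → ℝ :=
  y - Pi.single i δ + Pi.single j δ

lemma transfer_apply_left (y : Fin n → ℝ) {i j : Fin n} (hij : i ≠ j) (δ : ℝ) :
    transfer y i j δ i = y i - δ := by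
  simp [transfer, hij]

lemma transfer_apply_right (y : Fin n → ℝ) {i j : Fin n} (hij : i ≠ j) (δ : ℝ) :
    transfer y i j δ j = y j + δ := by
  simp [transfer, hij.symm]

lemma transfer_apply_of_ne (y : Fin n → ℝ) {i j m : Fin n} (hi : m ≠ i) (hj : m ≠ j) (δ : ℝ) :
    transfer y i j δ m = y m := by
  simp [transfer, hi, hj]

lemma psum_transfer (y : Fin n → ℝ) (i j : Fin n) (δ : ℝ) (k : ℕ) :
    psum (transfer y i j δ) k
      = psum y k - (if (i : ℕ) < k then δ else 0) + (if (j : ℕ) < k then δ else 0) := by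
  simp only [transfer, psum_add, psum_sub, psum_single]

lemma bTrans_transfer (y : Fin n → ℝ) {i j : Fin n} (hij : i < j) {δ : ℝ} (hδ : 0 ≤ δ)
    (hδy : δ ≤ y i) : BTrans y (transfer y i j δ) := by
  -- `λ = δ / y i`; when `y i = 0` also `δ = 0`, and the junk value `λ = 0` still works
  have hlam : δ / y i * y i = δ := by
    rcases (hδ.trans hδy).eq_or_lt with h | h
    · rw [← h, mul_zero]; linarith
    · exact div_mul_cancel₀ δ h.ne'
  refine ⟨i, j, δ / y i, hij, div_nonneg hδ (hδ.trans hδy), div_le_one_of_le₀ hδy (hδ.trans hδy),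
    funext fun m => ?_⟩
  rcases eq_or_ne m j with rfl | hmj
  · simp [transfer_apply_right y hij.ne, hlam]
  rcases eq_or_ne m i with rfl | hmi
  · simp [transfer_apply_left y hij.ne, hmj, sub_mul, hlam]
  · simp [transfer_apply_of_ne y hmi hmj, hmi, hmj]

lemma Maj.transfer_of_le_psum_sub {x y : Fin n → ℝ} (hmaj : Maj x y) {i j : Fin n}
    (hij : i < j) {δ : ℝ} (hδ : ∀ k : ℕ, (i : ℕ) < k → k ≤ j → δ ≤ psum y k - psum x k) :
    Maj x (transfer y i j δ) := by
  refine ⟨fun k _ => ?_, ?_⟩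
  · have := hmaj.psum_le k
    have := Fin.lt_def.mp hij
    rw [psum_transfer]
    by_cases hik : (i : ℕ) < k <;> by_cases hjk : (j : ℕ) < k <;>
      simp only [hik, hjk, if_true, if_false]
    · linarith
    · linarith [hδ k hik (not_lt.mp hjk)]
    · omega
    · linarith
  · simp [transfer, Finset.sum_add_distrib, Finset.sum_sub_distrib, hmaj.2]

noncomputable def disagree (x y : Fin n → ℝ) : Finset (Fin n) :=
  Finset.univ.filter fun i => x i ≠ y i

lemma one_lt_card_disagree {x y : Fin n → ℝ} (hsum : ∑ i, x i = ∑ i, y i) (hne : x ≠ y) :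
    1 < (disagree x y).card := by
  obtain ⟨i, hi⟩ := Function.ne_iff.mp hne
  by_contra! hcard
  have hagree : ∀ m, m ≠ i → x m = y m := fun m hm => by
    by_contra h
    exact hm (Finset.card_le_one.mp hcard m (by simp [disagree, h]) i (by simp [disagree, hi]))
  have : ∑ m, (x m - y m) = x i - y i :=
    Finset.sum_eq_single i (fun m _ hm => by rw [hagree m hm, sub_self]) (by simp)
  rw [Finset.sum_sub_distrib, hsum, sub_self] at this
  exact hi (by linarith)

lemma card_disagree_transfer_lt {x y : Fin n → ℝ} {i j : Fin n} (hij : i ≠ j) (hi : x i ≠ y i)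
    (hj : x j ≠ y j) {δ : ℝ} (hfix : x i = y i - δ ∨ x j = y j + δ) :
    (disagree x (transfer y i j δ)).card < (disagree x y).card := by
  have hsub : disagree x (transfer y i j δ) ⊆ disagree x y := fun m hm => by
    by_cases hmi : m = i
    · simpa [disagree, hmi] using hi
    by_cases hmj : m = j
    · simpa [disagree, hmj] using hj
    simpa [disagree, transfer_apply_of_ne y hmi hmj] using hm
  refine Finset.card_lt_card ((Finset.ssubset_iff_of_subset hsub).mpr ?_)
  rcases hfix with h | h
  · exact ⟨i, by simpa [disagree] using hi, by simp [disagree, transfer_apply_left y hij, h]⟩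
  · exact ⟨j, by simpa [disagree] using hj, by simp [disagree, transfer_apply_right y hij, h]⟩

lemma Maj.lt_of_eq_of_ne {x y : Fin n → ℝ} (hmaj : Maj x y) {i : Fin n} (heq : ∀ m < i, x m = y m)
    (hne : x i ≠ y i) : x i < y i := by
  have hprefix : psum x i = psum y i :=
    Finset.sum_congr rfl fun m hm => heq m (Fin.lt_def.mpr (Finset.mem_filter.mp hm).2)
  have h := hmaj.psum_le (i + 1)
  rw [psum_succ, psum_succ, hprefix] at h
  exact lt_of_le_of_ne (by linarith) hne

lemma exists_gt_lt_of_sum_eq {x y : Fin n → ℝ} (hsum : ∑ i, x i = ∑ i, y i) {i : Fin n}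
    (heq : ∀ m < i, x m = y m) (hi : x i < y i) : ∃ j, i < j ∧ y j < x j := by
  by_contra! h
  have hle : ∀ m, x m ≤ y m := fun m => by
    rcases lt_trichotomy m i with hm | rfl | hm
    · exact (heq m hm).le
    · exact hi.le
    · exact h m hm
  exact (Finset.sum_lt_sum (fun m _ => hle m) ⟨i, Finset.mem_univ i, hi⟩).ne hsum

lemma Maj.exists_bTrans {x y : Fin n → ℝ} (hx0 : ∀ i, 0 ≤ x i) (hmaj : Maj x y) (hne : x ≠ y) :
    ∃ y', BTrans y y' ∧ Maj x y' ∧ (disagree x y').card < (disagree x y).card := by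
  obtain ⟨i, hi, hi_min⟩ := wellFounded_lt.has_min {m | x m ≠ y m} (Function.ne_iff.mp hne)
  have heq : ∀ m < i, x m = y m := fun m hm => not_not.mp fun h => hi_min m h hm
  have hxi := hmaj.lt_of_eq_of_ne heq hi
  obtain ⟨j, ⟨hij, hj⟩, hj_min⟩ :=
    wellFounded_lt.has_min {m | i < m ∧ y m < x m} (exists_gt_lt_of_sum_eq hmaj.2 heq hxi)
  set δ := min (y i - x i) (x j - y j) with hδ_def
  have hδ : 0 ≤ δ := le_min (by linarith) (by linarith)
  have hδi : δ ≤ y i - x i := min_le_left _ _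
  have hgap : ∀ k : ℕ, (i : ℕ) < k → k ≤ j → δ ≤ psum y k - psum x k := by
    intro k hik hkj
    rw [← psum_sub]
    refine hδi.trans (le_psum_of_nonneg (g := y - x) (fun m hmk => ?_) hik)
    rcases lt_trichotomy m i with hm | rfl | hm
    · simp [heq m hm]
    · simpa using hxi.le
    · have hmj : m < j := Fin.lt_def.mpr (by omega)
      simpa using not_lt.mp fun h => hj_min m ⟨hm, h⟩ hmj
  refine ⟨transfer y i j δ, bTrans_transfer y hij hδ (by linarith [hx0 i]),
    hmaj.transfer_of_le_psum_sub hij hgap, card_disagree_transfer_lt hij.ne hi hj.ne' ?_⟩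
  rcases le_total (y i - x i) (x j - y j) with h | h
  · left; rw [hδ_def, min_eq_left h]; ring
  · right; rw [hδ_def, min_eq_right h]; ring

def BChain (y x : Fin n → ℝ) (m : ℕ) : Prop :=
  ∃ f : ℕ → Fin n → ℝ, f 0 = y ∧ f m = x ∧ ∀ t < m, BTrans (f t) (f (t + 1))

lemma bChain_zero (y : Fin n → ℝ) : BChain y y 0 :=
  ⟨fun _ => y, rfl, rfl, fun _ ht => absurd ht (Nat.not_lt_zero _)⟩

lemma BChain.cons {y y' x : Fin n → ℝ} {m : ℕ} (h : BTrans y y') (hc : BChain y' x m) :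
    BChain y x (m + 1) := by
  obtain ⟨f, hf0, hfm, hf⟩ := hc
  refine ⟨fun t => Nat.casesOn t y f, rfl, hfm, fun t ht => ?_⟩
  cases t with
  | zero => show BTrans y (f 0); rwa [hf0]
  | succ t => exact hf t (by omega)

theorem Maj.exists_bChain {x y : Fin n → ℝ} (hx0 : ∀ i, 0 ≤ x i) (hmaj : Maj x y) :
    ∃ m, m ≤ (disagree x y).card - 1 ∧ BChain y x m := by
  by_cases hxy : x = y
  · exact ⟨0, Nat.zero_le _, hxy ▸ bChain_zero x⟩
  obtain ⟨y', hB, hmaj', hlt⟩ := hmaj.exists_bTrans hx0 hxy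
  obtain ⟨m, hm, hc⟩ := hmaj'.exists_bChain hx0
  have := one_lt_card_disagree hmaj.2 hxy
  exact ⟨m + 1, by omega, hc.cons hB⟩
termination_by (disagree x y).card

end

theorem stmt11_general {n : ℕ} (x y : Fin n → ℝ)
    (hx0 : ∀ i, 0 ≤ x i)
    (hmaj : Maj x y) :
    ∃ (m : ℕ) (f : ℕ → Fin n → ℝ), m ≤ n - 1 ∧ f 0 = y ∧ f m = x ∧
      ∀ t < m, BTrans (f t) (f (t + 1)) := by
  obtain ⟨m, hm, f, hf0, hfm, hf⟩ := hmaj.exists_bChain hx0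
  have hcard : (disagree x y).card ≤ n := by simpa using (disagree x y).card_le_univ
  exact ⟨m, f, by omega, hf0, hfm, hf⟩

theorem stmt11 {n : ℕ} (x y : Fin n → ℝ)
    (hx0 : ∀ i, 0 ≤ x i) (hy0 : ∀ i, 0 ≤ y i)
    (hxs : Antitone x) (hys : Antitone y)
    (hmaj : Maj x y) :
    ∃ (m : ℕ) (f : ℕ → Fin n → ℝ), m ≤ n - 1 ∧ f 0 = y ∧ f m = x ∧
      ∀ t < m, BTrans (f t) (f (t + 1)) :=
  stmt11_general x y hx0 hmaj
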